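/- arXiv:1612.07497 — 3 statements merged into one kernel-verified Lean document; each statement's English description precedes it below -/
import Mathlib

section
/- Let f: ℝ^p → ℝ be convex and differentiable, λ > 0, and let θ̂ minimize f(θ) + λ|θ|₁. Set θ̃ = θ̂ − θ*, z* = |∇f(θ*)|_∞, and D(θ̂, θ*) = (θ̂ − θ*)'(∇f(θ̂) − ∇f(θ*)). If T is any index set containing the support of θ*, then (λ − z*)|θ̃_{T^c}|₁ ≤ D(θ̂, θ*) + (λ − z*)|θ̃_{T^c}|₁ ≤ (λ + z*)|θ̃_T|₁. -/
/-!
Write `θ̃ = θ̂ - θ*`. Monotonicity of the gradient of a convex function gives `D ≥ 0`. For the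
upper bound split `D = ⟨θ̃, ∇f(θ̂)⟩ - ⟨θ̃, ∇f(θ*)⟩`. Comparing the objective at `θ̂` with its
values on the segment towards `θ*`, and using convexity of the penalty, yields
`⟨θ̃, ∇f(θ̂)⟩ ≤ λ(|θ*|₁ - |θ̂|₁)`, and since `θ*` vanishes off `T` the triangle inequality bounds
this by `λ(|θ̃_T|₁ - |θ̃_{Tᶜ}|₁)`. Hölder's inequality gives `-⟨θ̃, ∇f(θ*)⟩ ≤ z*|θ̃|₁`.
-/

open Filter Topology Set

section FirstOrder

variable {E : Type*} [NormedAddCommGroup E] [NormedSpace ℝ E]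
  {f g : E → ℝ} {f' f'' : E →L[ℝ] ℝ} {s : Set E} {x y : E}

lemma HasFDerivAt.apply_le_of_sub_le_mul {v : E} {c : ℝ} (hf : HasFDerivAt f f' x)
    (h : ∀ t ∈ Ioo (0 : ℝ) 1, f (x + t • v) - f x ≤ t * c) : f' v ≤ c := by
  have hline : HasDerivAt (fun t : ℝ => f (x + t • v)) (f' v) 0 := by
    have hpath : HasDerivAt (fun t : ℝ => x + t • v) v 0 := by
      simpa using ((hasDerivAt_id (0 : ℝ)).smul_const v).const_add x
    exact (by simpa using hf : HasFDerivAt f f' (x + (0 : ℝ) • v)).comp_hasDerivAt 0 hpath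
  have hslope : Tendsto (slope (fun t : ℝ => f (x + t • v)) 0) (𝓝[>] 0) (𝓝 (f' v)) :=
    (hasDerivAt_iff_tendsto_slope.mp hline).mono_left (nhdsWithin_mono _ fun t ht => ne_of_gt ht)
  refine le_of_tendsto hslope ?_
  filter_upwards [Ioo_mem_nhdsGT (zero_lt_one' ℝ)] with t ht
  rw [slope_def_field, div_le_iff₀ (by simpa using ht.1)]
  simpa [mul_comm] using h t ht

lemma ConvexOn.fderiv_apply_sub_le (hf : ConvexOn ℝ s f) (hx : x ∈ s) (hy : y ∈ s)
    (hfx : HasFDerivAt f f' x) : f' (y - x) ≤ f y - f x := by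
  refine hfx.apply_le_of_sub_le_mul fun t ht => ?_
  have hseg : x + t • (y - x) = (1 - t) • x + t • y := by
    rw [← AffineMap.lineMap_apply_module, AffineMap.lineMap_apply_module', add_comm]
  have hjensen := hf.2 hx hy (sub_nonneg.2 ht.2.le) ht.1.le (sub_add_cancel 1 t)
  rw [hseg]
  simp only [smul_eq_mul] at hjensen
  linarith

lemma ConvexOn.fderiv_apply_sub_fderiv_apply_nonneg (hf : ConvexOn ℝ s f) (hx : x ∈ s)
    (hy : y ∈ s) (hfx : HasFDerivAt f f' x) (hfy : HasFDerivAt f f'' y) :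
    0 ≤ f' (x - y) - f'' (x - y) := by
  have hxy := hf.fderiv_apply_sub_le hx hy hfx
  have hyx := hf.fderiv_apply_sub_le hy hx hfy
  rw [← neg_sub, map_neg] at hxy
  linarith

lemma IsMinOn.sub_le_fderiv_apply_of_convexOn (hg : ConvexOn ℝ s g)
    (hmin : IsMinOn (fun z => f z + g z) s x) (hx : x ∈ s) (hy : y ∈ s)
    (hfx : HasFDerivAt f f' x) : g x - g y ≤ f' (y - x) := by
  suffices -f' (y - x) ≤ g y - g x by linarith
  refine hfx.neg.apply_le_of_sub_le_mul fun t ht => ?_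
  have hseg : x + t • (y - x) = (1 - t) • x + t • y := by
    rw [← AffineMap.lineMap_apply_module, AffineMap.lineMap_apply_module', add_comm]
  have hjensen := hg.2 hx hy (sub_nonneg.2 ht.2.le) ht.1.le (sub_add_cancel 1 t)
  have hle : f x + g x ≤ f ((1 - t) • x + t • y) + g ((1 - t) • x + t • y) :=
    hmin (hg.1 hx hy (sub_nonneg.2 ht.2.le) ht.1.le (sub_add_cancel 1 t))
  rw [hseg]
  simp only [smul_eq_mul] at hjensen
  simp only [Pi.neg_apply]
  linarith

end FirstOrder

section Coordinates

variable {ι : Type*} [Fintype ι]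

lemma ContinuousLinearMap.apply_eq_sum_mul_apply_single [DecidableEq ι]
    (L : (ι → ℝ) →L[ℝ] ℝ) (v : ι → ℝ) : L v = ∑ i, v i * L (Pi.single i 1) := by
  conv_lhs => rw [← Finset.univ_sum_single v]
  simp only [map_sum]
  refine Finset.sum_congr rfl fun i _ => ?_
  rw [← smul_eq_mul, ← map_smul, ← Pi.single_smul, smul_eq_mul, mul_one]

lemma convexOn_univ_sum_abs : ConvexOn ℝ univ fun v : ι → ℝ => ∑ i, |v i| := by
  refine ⟨convex_univ, fun v _ w _ a b ha hb _ => ?_⟩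
  simp only [Pi.add_apply, Pi.smul_apply, smul_eq_mul, Finset.mul_sum, ← Finset.sum_add_distrib]
  refine Finset.sum_le_sum fun i _ => ?_
  calc |a * v i + b * w i| ≤ |a * v i| + |b * w i| := abs_add_le _ _
    _ = a * |v i| + b * |w i| := by rw [abs_mul, abs_mul, abs_of_nonneg ha, abs_of_nonneg hb]

lemma abs_sum_mul_le_iSup_abs_mul_sum_abs (v w : ι → ℝ) :
    |∑ i, v i * w i| ≤ (⨆ i, |w i|) * ∑ i, |v i| := by
  rw [Finset.mul_sum]
  refine (Finset.abs_sum_le_sum_abs _ _).trans (Finset.sum_le_sum fun i _ => ?_)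
  rw [abs_mul, mul_comm]
  exact mul_le_mul_of_nonneg_right (le_ciSup (Set.finite_range fun i => |w i|).bddAbove i) (abs_nonneg _)

lemma sum_abs_sub_sum_abs_le_of_support_subset [DecidableEq ι] (T : Finset ι) (a b : ι → ℝ)
    (hb : ∀ i, b i ≠ 0 → i ∈ T) :
    ∑ i, |b i| - ∑ i, |a i| ≤ ∑ i ∈ T, |a i - b i| - ∑ i ∈ Tᶜ, |a i - b i| := by
  have hbT : ∀ i ∈ Tᶜ, b i = 0 := fun i hi => not_not.1 fun h => Finset.mem_compl.1 hi (hb i h)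
  have hCb : ∑ i ∈ Tᶜ, |b i| = 0 := Finset.sum_eq_zero fun i hi => by rw [hbT i hi, abs_zero]
  have hCa : ∑ i ∈ Tᶜ, |a i| = ∑ i ∈ Tᶜ, |a i - b i| :=
    Finset.sum_congr rfl fun i hi => by rw [hbT i hi, sub_zero]
  have hT : ∑ i ∈ T, |b i| - ∑ i ∈ T, |a i| ≤ ∑ i ∈ T, |a i - b i| := by
    rw [← Finset.sum_sub_distrib]
    exact Finset.sum_le_sum fun i _ => (abs_sub_abs_le_abs_sub _ _).trans (abs_sub_comm _ _).le
  rw [← Finset.sum_add_sum_compl T (fun i => |b i|), ← Finset.sum_add_sum_compl T (fun i => |a i|)]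
  linarith

end Coordinates

/-- Basic Lasso inequality: if `θ̂` minimizes `f(θ) + λ|θ|₁` for convex differentiable `f`,
`θ̃ = θ̂ − θ*`, `z* = |∇f(θ*)|_∞`, `D = (θ̂−θ*)'(∇f(θ̂)−∇f(θ*))`, and `T` contains the
support of `θ*`, then
`(λ − z*)|θ̃_{T^c}|₁ ≤ D + (λ − z*)|θ̃_{T^c}|₁ ≤ (λ + z*)|θ̃_T|₁`. -/
theorem stmt5 (p : ℕ) (f : (Fin p → ℝ) → ℝ)
    (hconv : ConvexOn ℝ Set.univ f) (hdiff : Differentiable ℝ f)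
    (lam : ℝ) (hlam : 0 < lam)
    (θstar θhat : Fin p → ℝ) (T : Finset (Fin p))
    (hsupp : ∀ j, θstar j ≠ 0 → j ∈ T)
    (hmin : IsMinOn (fun θ => f θ + lam * ∑ j, |θ j|) Set.univ θhat)
    (grad : (Fin p → ℝ) → Fin p → ℝ)
    (hgrad : ∀ x j, grad x j = fderiv ℝ f x (Pi.single j 1 : Fin p → ℝ))
    (θt : Fin p → ℝ) (hθt : θt = fun j => θhat j - θstar j)
    (zstar : ℝ) (hz : zstar = ⨆ j, |grad θstar j|)
    (D : ℝ) (hD : D = ∑ j, θt j * (grad θhat j - grad θstar j)) :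
    (lam - zstar) * (∑ j ∈ Tᶜ, |θt j|) ≤ D + (lam - zstar) * (∑ j ∈ Tᶜ, |θt j|) ∧
    D + (lam - zstar) * (∑ j ∈ Tᶜ, |θt j|) ≤ (lam + zstar) * (∑ j ∈ T, |θt j|) := by
  subst hθt hD
  beta_reduce
  have hf' (x : Fin p → ℝ) : HasFDerivAt f (fderiv ℝ f x) x := (hdiff x).hasFDerivAt
  have hcoord (x : Fin p → ℝ) :
      fderiv ℝ f x (θhat - θstar) = ∑ j, (θhat j - θstar j) * grad x j := by
    simp only [ContinuousLinearMap.apply_eq_sum_mul_apply_single _ (θhat - θstar), hgrad,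
      Pi.sub_apply]
  have hD : ∑ j, (θhat j - θstar j) * (grad θhat j - grad θstar j)
      = fderiv ℝ f θhat (θhat - θstar) - fderiv ℝ f θstar (θhat - θstar) := by
    simp only [hcoord, mul_sub, Finset.sum_sub_distrib]
  have hmono := hconv.fderiv_apply_sub_fderiv_apply_nonneg (mem_univ θhat) (mem_univ θstar)
    (hf' θhat) (hf' θstar)
  have hopt : lam * ∑ j, |θhat j| - lam * ∑ j, |θstar j| ≤ -fderiv ℝ f θhat (θhat - θstar) := by
    simpa only [← neg_sub θhat, map_neg, smul_eq_mul] using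
      hmin.sub_le_fderiv_apply_of_convexOn (convexOn_univ_sum_abs.smul hlam.le)
        (mem_univ θhat) (mem_univ θstar) (hf' θhat)
  have hsparse := mul_le_mul_of_nonneg_left
    (sum_abs_sub_sum_abs_le_of_support_subset T θhat θstar hsupp) hlam.le
  have hholder : -fderiv ℝ f θstar (θhat - θstar) ≤
      zstar * (∑ j ∈ T, |θhat j - θstar j| + ∑ j ∈ Tᶜ, |θhat j - θstar j|) := by
    rw [Finset.sum_add_sum_compl, hcoord, hz]
    exact (neg_le_abs _).trans (abs_sum_mul_le_iSup_abs_mul_sum_abs _ _)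
  rw [hD]
  constructor <;> linarith
end

section
/- For a nonnegative definite p×p matrix Σ, ξ > 1, and index set T with |T| = d₀, define the cone invertibility factor F(ξ,T,Σ) = inf{θ'Σθ/(|θ_T|₁|θ|_∞) : 0 ≠ θ ∈ C(ξ,T)}. If Σ₁, Σ₂ are nonnegative definite and |Σ₁ − Σ₂|_∞ ≤ t, then F(ξ,T,Σ₁) ≥ F(ξ,T,Σ₂) − (1+ξ)²d₀t. -/
noncomputable section

/-- The cone invertibility factor
`F(ξ,T,Σ) = inf{θ'Σθ/(|θ_T|₁ |θ|_∞) : 0 ≠ θ, |θ_{T^c}|₁ ≤ ξ|θ_T|₁}`. -/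
def coneCIF {ι : Type*} [Fintype ι] [DecidableEq ι]
    (ξ : ℝ) (T : Finset ι) (Sig : Matrix ι ι ℝ) : ℝ :=
  sInf {x | ∃ θ : ι → ℝ, θ ≠ 0 ∧ (∑ j ∈ Tᶜ, |θ j|) ≤ ξ * ∑ j ∈ T, |θ j| ∧
    x = (∑ k, ∑ l, θ k * Sig k l * θ l) / ((∑ j ∈ T, |θ j|) * (⨆ j, |θ j|))}

/-! On the cone, `|θ'Σθ| ≤ |Σ|_∞ |θ|₁² ≤ |Σ|_∞ (1+ξ)² |θ_T|₁² ≤ |Σ|_∞ (1+ξ)² d₀ |θ_T|₁ |θ|_∞`,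
so the ratio defining `F` is bounded by `(1+ξ)² d₀ |Σ|_∞` for every matrix `Σ`. Applied to
`Σ₂ − Σ₁` this moves each ratio by at most `(1+ξ)² d₀ t`; applied to `Σ₂` it makes the set
defining `F(ξ,T,Σ₂)` bounded below, so its `sInf` is not the junk value `0`. -/

lemma Real.sInf_image_sub_le_sInf_image {α : Type*} {s : Set α} {f g : α → ℝ} {c : ℝ}
    (hc : 0 ≤ c) (hg : BddBelow (g '' s)) (hfg : ∀ a ∈ s, g a - c ≤ f a) :
    sInf (g '' s) - c ≤ sInf (f '' s) := by
  rcases s.eq_empty_or_nonempty with rfl | hs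
  · simpa using hc
  refine le_csInf (hs.image f) ?_
  rintro _ ⟨a, ha, rfl⟩
  linarith [csInf_le hg ⟨a, ha, rfl⟩, hfg a ha]

section Cone

variable {ι : Type*} [Fintype ι]

def quadForm (S : Matrix ι ι ℝ) (θ : ι → ℝ) : ℝ := ∑ k, ∑ l, θ k * S k l * θ l

lemma quadForm_sub (S₁ S₂ : Matrix ι ι ℝ) (θ : ι → ℝ) :
    quadForm (S₁ - S₂) θ = quadForm S₁ θ - quadForm S₂ θ := by
  simp only [quadForm, Matrix.sub_apply, mul_sub, sub_mul, Finset.sum_sub_distrib]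

lemma abs_quadForm_le {S : Matrix ι ι ℝ} {s : ℝ} (hS : ∀ k l, |S k l| ≤ s) (θ : ι → ℝ) :
    |quadForm S θ| ≤ s * (∑ j, |θ j|) ^ 2 := by
  calc |quadForm S θ| ≤ ∑ k, ∑ l, |θ k * S k l * θ l| :=
        (Finset.abs_sum_le_sum_abs _ _).trans
          (Finset.sum_le_sum fun k _ => Finset.abs_sum_le_sum_abs _ _)
    _ ≤ ∑ k, ∑ l, |θ k| * s * |θ l| := by
        gcongr with k _ l _
        rw [abs_mul, abs_mul]
        gcongr
        exact hS k l
    _ = s * (∑ j, |θ j|) ^ 2 := by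
        simp only [← Finset.sum_mul, ← Finset.mul_sum]
        ring

lemma iSup_abs_pos {θ : ι → ℝ} (hθ : θ ≠ 0) : 0 < ⨆ j, |θ j| := by
  obtain ⟨j, hj⟩ := Function.ne_iff.mp hθ
  exact (abs_pos.mpr hj).trans_le (le_ciSup (Set.finite_range fun j => |θ j|).bddAbove j)

lemma sum_abs_le_card_mul_iSup_abs (T : Finset ι) (θ : ι → ℝ) :
    ∑ j ∈ T, |θ j| ≤ T.card * ⨆ j, |θ j| := by
  simpa using Finset.sum_le_card_nsmul T _ _
    fun j _ => le_ciSup (Set.finite_range fun j => |θ j|).bddAbove j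

variable [DecidableEq ι] {ξ : ℝ} {T : Finset ι} {θ : ι → ℝ}

def restrictedCone (ξ : ℝ) (T : Finset ι) : Set (ι → ℝ) :=
  {θ | θ ≠ 0 ∧ ∑ j ∈ Tᶜ, |θ j| ≤ ξ * ∑ j ∈ T, |θ j|}

def coneRatio (T : Finset ι) (S : Matrix ι ι ℝ) (θ : ι → ℝ) : ℝ :=
  quadForm S θ / ((∑ j ∈ T, |θ j|) * ⨆ j, |θ j|)

lemma coneCIF_eq_sInf_image (ξ : ℝ) (T : Finset ι) (S : Matrix ι ι ℝ) :
    coneCIF ξ T S = sInf (coneRatio T S '' restrictedCone ξ T) := by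
  simp only [coneCIF, coneRatio, quadForm, restrictedCone, Set.image, Set.mem_ofPred_eq,
    and_assoc, eq_comm]

lemma sum_abs_le_of_mem_restrictedCone (hθ : θ ∈ restrictedCone ξ T) :
    ∑ j, |θ j| ≤ (1 + ξ) * ∑ j ∈ T, |θ j| := by
  rw [← Finset.sum_add_sum_compl T]
  linarith [hθ.2]

lemma sum_abs_pos_of_mem_restrictedCone (hθ : θ ∈ restrictedCone ξ T) :
    0 < ∑ j ∈ T, |θ j| := by
  have hpos : 0 < ∑ j, |θ j| := by
    obtain ⟨j, hj⟩ := Function.ne_iff.mp hθ.1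
    exact Finset.sum_pos' (fun j _ => abs_nonneg _) ⟨j, Finset.mem_univ j, abs_pos.mpr hj⟩
  refine (Finset.sum_nonneg fun j _ => abs_nonneg (θ j)).lt_of_ne fun hzero => ?_
  have hl1 := sum_abs_le_of_mem_restrictedCone hθ
  rw [← hzero, mul_zero] at hl1
  linarith

lemma abs_coneRatio_le {S : Matrix ι ι ℝ} {s : ℝ} (hs : 0 ≤ s) (hS : ∀ k l, |S k l| ≤ s)
    (hθ : θ ∈ restrictedCone ξ T) : |coneRatio T S θ| ≤ (1 + ξ) ^ 2 * T.card * s := by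
  set A := ∑ j ∈ T, |θ j|
  set B := ⨆ j, |θ j|
  have hA : 0 < A := sum_abs_pos_of_mem_restrictedCone hθ
  have hB : 0 < B := iSup_abs_pos hθ.1
  have hl1 : ∑ j, |θ j| ≤ (1 + ξ) * A := sum_abs_le_of_mem_restrictedCone hθ
  have hl1sq : (∑ j, |θ j|) ^ 2 ≤ (1 + ξ) ^ 2 * T.card * (A * B) :=
    calc (∑ j, |θ j|) ^ 2 ≤ ((1 + ξ) * A) ^ 2 :=
          pow_le_pow_left₀ (Finset.sum_nonneg fun j _ => abs_nonneg _) hl1 2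
      _ = (1 + ξ) ^ 2 * A * A := by ring
      _ ≤ (1 + ξ) ^ 2 * A * (T.card * B) := by
          gcongr
          exact sum_abs_le_card_mul_iSup_abs T θ
      _ = (1 + ξ) ^ 2 * T.card * (A * B) := by ring
  rw [coneRatio, abs_div, abs_of_pos (mul_pos hA hB), div_le_iff₀ (mul_pos hA hB)]
  calc |quadForm S θ| ≤ s * (∑ j, |θ j|) ^ 2 := abs_quadForm_le hS θ
    _ ≤ s * ((1 + ξ) ^ 2 * T.card * (A * B)) := by gcongr
    _ = (1 + ξ) ^ 2 * T.card * s * (A * B) := by ring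

lemma bddBelow_coneRatio_image (ξ : ℝ) (T : Finset ι) (S : Matrix ι ι ℝ) :
    BddBelow (coneRatio T S '' restrictedCone ξ T) := by
  refine ⟨-((1 + ξ) ^ 2 * T.card * ∑ k, ∑ l, |S k l|), ?_⟩
  rintro _ ⟨θ, hθ, rfl⟩
  refine neg_le_of_abs_le (abs_coneRatio_le (by positivity) (fun k l => ?_) hθ)
  exact (Finset.single_le_sum (fun l _ => abs_nonneg (S k l)) (Finset.mem_univ l)).trans
    (Finset.single_le_sum (f := fun k => ∑ l, |S k l|)
      (fun k _ => Finset.sum_nonneg fun l _ => abs_nonneg _) (Finset.mem_univ k))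

lemma coneRatio_sub_le {S₁ S₂ : Matrix ι ι ℝ} {t : ℝ} (ht : 0 ≤ t)
    (hS : ∀ k l, |S₁ k l - S₂ k l| ≤ t) (hθ : θ ∈ restrictedCone ξ T) :
    coneRatio T S₂ θ - (1 + ξ) ^ 2 * T.card * t ≤ coneRatio T S₁ θ := by
  have hsub : coneRatio T S₂ θ - coneRatio T S₁ θ = coneRatio T (S₂ - S₁) θ := by
    rw [coneRatio, coneRatio, coneRatio, quadForm_sub, sub_div]
  have hbound := abs_coneRatio_le (S := S₂ - S₁) ht
    (fun k l => by rw [Matrix.sub_apply, abs_sub_comm]; exact hS k l) hθ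
  linarith [le_abs_self (coneRatio T (S₂ - S₁) θ)]

end Cone

theorem stmt7_general (p : ℕ) (ξ t : ℝ) (ht : 0 ≤ t) (T : Finset (Fin p))
    (Sig1 Sig2 : Matrix (Fin p) (Fin p) ℝ)
    (hdiff : ∀ k l, |Sig1 k l - Sig2 k l| ≤ t) :
    coneCIF ξ T Sig1 ≥ coneCIF ξ T Sig2 - (1 + ξ)^2 * T.card * t := by
  rw [ge_iff_le, coneCIF_eq_sInf_image, coneCIF_eq_sInf_image]
  exact Real.sInf_image_sub_le_sInf_image (by positivity) (bddBelow_coneRatio_image ξ T Sig2)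
    fun θ hθ => coneRatio_sub_le ht hdiff hθ

/-- If `Sig1, Sig2` are nonnegative definite and `|Sig1 − Sig2|_∞ ≤ t`, then
`F(ξ,T,Sig1) ≥ F(ξ,T,Sig2) − (1+ξ)² d₀ t` where `d₀ = |T|`. -/
theorem stmt7 (p : ℕ) (ξ t : ℝ) (hξ : 1 < ξ) (ht : 0 ≤ t) (T : Finset (Fin p))
    (Sig1 Sig2 : Matrix (Fin p) (Fin p) ℝ)
    (h1 : Sig1.PosSemidef) (h2 : Sig2.PosSemidef)
    (hdiff : ∀ k l, |Sig1 k l - Sig2 k l| ≤ t) :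
    coneCIF ξ T Sig1 ≥ coneCIF ξ T Sig2 - (1 + ξ)^2 * T.card * t :=
  stmt7_general p ξ t ht T Sig1 Sig2 hdiff
end
end

section
/- For the log-sum-exp type function g(θ) = log((1/m)Σ_{k=1}^m exp(θ'v_k)/c_k) with c_k > 0 and vectors v_k ∈ ℝ^p, and any unit-ℓ₁-norm direction θ with max_k |θ'v_k| ≤ 1, one has for all t ≥ 0: θ'(∇g(θ* + tθ) − ∇g(θ*)) ≥ t e^{-2t} θ'∇²g(θ*)θ. -/
/-!
Along the line `s ↦ θ* + s θ` the weights `exp((θ* + s θ)'v_k) / c_k` are the exponential tilt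
`w_k e^{s u_k}` of `w` by `u_k = θ'v_k`, so `θ'∇g(θ* + s θ)` is the tilted mean of `u`, whose
derivative in `s` is the tilted variance. As `|u_k| ≤ 1`, the tilted weights lie between
`e^{-s} w_k` and `e^{s} w_k`; since a variance is `min_x Σ ν_k (u_k - x)² / Σ ν_k`, the tilted
variance is at least `e^{-2s}` times the untilted one. The mean value theorem on `[0, t]` concludes.
-/

open Real Finset

noncomputable section

section WeightedMoments

variable {ι : Type*} [Fintype ι]

def weightedMean (w u : ι → ℝ) : ℝ := (∑ k, w k * u k) / ∑ k, w k

def weightedVar (w u : ι → ℝ) : ℝ := (∑ k, w k * u k ^ 2) / (∑ k, w k) - weightedMean w u ^ 2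

lemma sum_mul_sub_sq_eq (w u : ι → ℝ) (hW : ∑ k, w k ≠ 0) (x : ℝ) :
    ∑ k, w k * (u k - x) ^ 2
      = weightedVar w u * ∑ k, w k + (∑ k, w k) * (x - weightedMean w u) ^ 2 := by
  have hexpand : ∑ k, w k * (u k - x) ^ 2
      = ∑ k, w k * u k ^ 2 - 2 * x * ∑ k, w k * u k + x ^ 2 * ∑ k, w k := by
    simp only [mul_sum, ← sum_sub_distrib, ← sum_add_distrib]
    exact sum_congr rfl fun k _ => by ring
  rw [hexpand, weightedVar, weightedMean]
  field_simp
  ring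

lemma weightedVar_mul_sum_le (w u : ι → ℝ) (hW : 0 < ∑ k, w k) (x : ℝ) :
    weightedVar w u * ∑ k, w k ≤ ∑ k, w k * (u k - x) ^ 2 := by
  rw [sum_mul_sub_sq_eq w u hW.ne' x]
  exact le_add_of_nonneg_right (by positivity)

lemma weightedVar_mul_sum_eq (w u : ι → ℝ) (hW : ∑ k, w k ≠ 0) :
    weightedVar w u * ∑ k, w k = ∑ k, w k * (u k - weightedMean w u) ^ 2 := by
  simp [sum_mul_sub_sq_eq w u hW]

lemma weightedVar_nonneg {w : ι → ℝ} (u : ι → ℝ) (hw : ∀ k, 0 ≤ w k) (hW : 0 < ∑ k, w k) :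
    0 ≤ weightedVar w u := by
  refine nonneg_of_mul_nonneg_left ?_ hW
  rw [weightedVar_mul_sum_eq w u hW.ne']
  exact sum_nonneg fun k _ => mul_nonneg (hw k) (sq_nonneg _)

lemma div_mul_weightedVar_le {w ν : ι → ℝ} (u : ι → ℝ) (hw : ∀ k, 0 ≤ w k)
    (hW : 0 < ∑ k, w k) {a b : ℝ} (ha : 0 < a) (hlo : ∀ k, a * w k ≤ ν k)
    (hhi : ∀ k, ν k ≤ b * w k) :
    a / b * weightedVar w u ≤ weightedVar ν u := by
  have hν_lo : a * ∑ k, w k ≤ ∑ k, ν k := by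
    rw [mul_sum]; exact sum_le_sum fun k _ => hlo k
  have hν_hi : ∑ k, ν k ≤ b * ∑ k, w k := by
    rw [mul_sum]; exact sum_le_sum fun k _ => hhi k
  have hν : 0 < ∑ k, ν k := (mul_pos ha hW).trans_le hν_lo
  have hb : 0 < b := pos_of_mul_pos_left (hν.trans_le hν_hi) hW.le
  have hVν : 0 ≤ weightedVar ν u :=
    weightedVar_nonneg u (fun k => (mul_nonneg ha.le (hw k)).trans (hlo k)) hν
  set μ := weightedMean ν u
  have hdominate : a * ∑ k, w k * (u k - μ) ^ 2 ≤ ∑ k, ν k * (u k - μ) ^ 2 := by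
    rw [mul_sum]
    exact sum_le_sum fun k _ => by
      rw [← mul_assoc]; exact mul_le_mul_of_nonneg_right (hlo k) (sq_nonneg _)
  have key : a * (weightedVar w u * ∑ k, w k) ≤ b * (weightedVar ν u * ∑ k, w k) :=
    calc a * (weightedVar w u * ∑ k, w k)
        ≤ a * ∑ k, w k * (u k - μ) ^ 2 :=
          mul_le_mul_of_nonneg_left (weightedVar_mul_sum_le w u hW μ) ha.le
      _ ≤ weightedVar ν u * ∑ k, ν k := (weightedVar_mul_sum_eq ν u hν.ne').symm ▸ hdominate
      _ ≤ weightedVar ν u * (b * ∑ k, w k) := mul_le_mul_of_nonneg_left hν_hi hVν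
      _ = b * (weightedVar ν u * ∑ k, w k) := mul_left_comm _ _ _
  rw [div_mul_eq_mul_div, div_le_iff₀ hb]
  nlinarith

end WeightedMoments

section ExponentialTilting

variable {ι : Type*}

def tilt (w u : ι → ℝ) (s : ℝ) (k : ι) : ℝ := w k * exp (s * u k)

lemma hasDerivAt_tilt (w u : ι → ℝ) (k : ι) (s : ℝ) :
    HasDerivAt (fun s => tilt w u s k) (tilt w u s k * u k) s := by
  have := ((hasDerivAt_mul_const (x := s) (u k)).exp).const_mul (w k)
  exact this.congr_deriv (by rw [tilt]; ring)

variable [Fintype ι]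

def tiltedMean (w u : ι → ℝ) (s : ℝ) : ℝ := weightedMean (tilt w u s) u

lemma sum_tilt_pos {w : ι → ℝ} (u : ι → ℝ) (hw : ∀ k, 0 ≤ w k) (hW : 0 < ∑ k, w k) (s : ℝ) :
    0 < ∑ k, tilt w u s k := by
  obtain ⟨k, -, hk⟩ := exists_lt_of_sum_lt (s := univ) (f := fun _ => (0 : ℝ)) (by simpa using hW)
  exact sum_pos' (fun k _ => mul_nonneg (hw k) (exp_pos _).le)
    ⟨k, mem_univ k, mul_pos hk (exp_pos _)⟩

lemma exp_neg_two_mul_weightedVar_le {w u : ι → ℝ} (hw : ∀ k, 0 ≤ w k) (hW : 0 < ∑ k, w k)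
    (hu : ∀ k, |u k| ≤ 1) {s : ℝ} (hs : 0 ≤ s) :
    exp (-2 * s) * weightedVar w u ≤ weightedVar (tilt w u s) u := by
  have hsu : ∀ k, -s ≤ s * u k ∧ s * u k ≤ s := fun k => by
    obtain ⟨h₁, h₂⟩ := abs_le.mp (hu k)
    constructor <;> nlinarith
  have hlo : ∀ k, exp (-s) * w k ≤ tilt w u s k := fun k => by
    rw [tilt, mul_comm]; exact mul_le_mul_of_nonneg_left (exp_le_exp.mpr (hsu k).1) (hw k)
  have hhi : ∀ k, tilt w u s k ≤ exp s * w k := fun k => by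
    rw [tilt, mul_comm (exp s)]; exact mul_le_mul_of_nonneg_left (exp_le_exp.mpr (hsu k).2) (hw k)
  have h := div_mul_weightedVar_le u hw hW (exp_pos (-s)) hlo hhi
  rwa [← exp_sub, show -s - s = -2 * s by ring] at h

lemma hasDerivAt_tiltedMean {w : ι → ℝ} (u : ι → ℝ) (hw : ∀ k, 0 ≤ w k) (hW : 0 < ∑ k, w k)
    (s : ℝ) : HasDerivAt (tiltedMean w u) (weightedVar (tilt w u s) u) s := by
  have hA : HasDerivAt (fun s => ∑ k, tilt w u s k) (∑ k, tilt w u s k * u k) s :=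
    HasDerivAt.fun_sum fun k _ => hasDerivAt_tilt w u k s
  have hB : HasDerivAt (fun s => ∑ k, tilt w u s k * u k) (∑ k, tilt w u s k * u k ^ 2) s :=
    HasDerivAt.fun_sum fun k _ =>
      ((hasDerivAt_tilt w u k s).mul_const (u k)).congr_deriv (by ring)
  have hpos := sum_tilt_pos u hw hW s
  refine (hB.div hA hpos.ne').congr_deriv ?_
  rw [weightedVar, weightedMean]
  field_simp

lemma mul_exp_neg_two_mul_weightedVar_le_tiltedMean_sub {w u : ι → ℝ} (hw : ∀ k, 0 ≤ w k)
    (hW : 0 < ∑ k, w k) (hu : ∀ k, |u k| ≤ 1) {t : ℝ} (ht : 0 ≤ t) :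
    t * exp (-2 * t) * weightedVar w u ≤ tiltedMean w u t - tiltedMean w u 0 := by
  have hderiv := hasDerivAt_tiltedMean u hw hW
  have hgrowth : ∀ s ∈ interior (Set.Icc 0 t),
      exp (-2 * t) * weightedVar w u ≤ deriv (tiltedMean w u) s := by
    rw [interior_Icc]
    rintro s ⟨hs₀, hst⟩
    rw [(hderiv s).deriv]
    calc exp (-2 * t) * weightedVar w u ≤ exp (-2 * s) * weightedVar w u :=
          mul_le_mul_of_nonneg_right (exp_le_exp.mpr (by linarith))
            (weightedVar_nonneg u hw hW)
      _ ≤ weightedVar (tilt w u s) u := exp_neg_two_mul_weightedVar_le hw hW hu hs₀.le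
  have := (convex_Icc 0 t).mul_sub_le_image_sub_of_le_deriv
    (fun s _ => (hderiv s).continuousAt.continuousWithinAt)
    (fun s _ => (hderiv s).differentiableAt.differentiableWithinAt) hgrowth
    0 ⟨le_rfl, ht⟩ t ⟨ht, le_rfl⟩ ht
  linarith

end ExponentialTilting

section LogSumExp

variable {n ι : Type*} [Fintype n] [Fintype ι]

lemma sum_mul_apply_single [DecidableEq n] (D : (n → ℝ) →L[ℝ] ℝ) (θ : n → ℝ) :
    ∑ j, θ j * D (Pi.single j 1) = D θ := by
  conv_rhs => rw [← univ_sum_single θ, map_sum]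
  refine sum_congr rfl fun j _ => ?_
  rw [← smul_eq_mul, ← map_smul, ← Pi.single_smul', smul_eq_mul, mul_one]

lemma fderiv_log_const_mul_sum_exp_apply [Nonempty ι] (v : ι → n → ℝ) {c : ι → ℝ}
    (hc : ∀ k, 0 < c k) {a : ℝ} (ha : a ≠ 0) (x d : n → ℝ) :
    fderiv ℝ (fun x => log (a * ∑ k, exp (∑ j, x j * v k j) / c k)) x d
      = weightedMean (fun k => exp (∑ j, x j * v k j) / c k) (fun k => ∑ j, d j * v k j) := by
  have hlin : ∀ k, HasFDerivAt (fun y : n → ℝ => ∑ j, y j * v k j)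
      (∑ j, v k j • ContinuousLinearMap.proj (R := ℝ) (φ := fun _ : n => ℝ) j) x :=
    fun k => HasFDerivAt.fun_sum fun j _ => (hasFDerivAt_apply j x).mul_const (v k j)
  have hpos : 0 < ∑ k, exp (∑ j, x j * v k j) / c k :=
    sum_pos (fun k _ => div_pos (exp_pos _) (hc k)) univ_nonempty
  simp only [div_eq_mul_inv] at hpos ⊢
  have hS := (HasFDerivAt.fun_sum (u := univ) fun k _ =>
    ((hlin k).exp).mul_const (c k)⁻¹).const_mul a
  rw [(hS.log (mul_ne_zero ha hpos.ne')).fderiv, weightedMean]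
  simp only [smul_apply, _root_.sum_apply, ContinuousLinearMap.proj_apply, smul_eq_mul]
  field_simp
  simp only [mul_comm (v _ _)]

end LogSumExp

theorem stmt17_general (p m : ℕ) [NeZero m] (v : Fin m → Fin p → ℝ) (c : Fin m → ℝ)
    (hc : ∀ k, 0 < c k) (θstar θ : Fin p → ℝ)
    (hbdd : ∀ k, |∑ j, θ j * v k j| ≤ 1)
    (g : (Fin p → ℝ) → ℝ)
    (hg : g = fun x => Real.log ((1 / m : ℝ) * ∑ k, Real.exp (∑ j, x j * v k j) / c k))
    (w : Fin m → ℝ) (hw : ∀ k, w k = Real.exp (∑ j, θstar j * v k j) / c k)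
    (t : ℝ) (ht : 0 ≤ t) :
    ∑ j, θ j * (fderiv ℝ g (θstar + t • θ) (Pi.single j 1 : Fin p → ℝ)
        - fderiv ℝ g θstar (Pi.single j 1 : Fin p → ℝ))
      ≥ t * Real.exp (-2 * t) *
        ((∑ k, w k * (∑ j, θ j * v k j) ^ 2) / (∑ k, w k)
          - ((∑ k, w k * (∑ j, θ j * v k j)) / (∑ k, w k)) ^ 2) := by
  set u : Fin m → ℝ := fun k => ∑ j, θ j * v k j
  have hw_pos : ∀ k, 0 < w k := fun k => hw k ▸ div_pos (exp_pos _) (hc k)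
  have hW : 0 < ∑ k, w k := sum_pos (fun k _ => hw_pos k) univ_nonempty
  have hgrad : ∀ s, fderiv ℝ g (θstar + s • θ) θ = tiltedMean w u s := by
    intro s
    rw [hg, fderiv_log_const_mul_sum_exp_apply v hc (by simp [NeZero.ne m]), tiltedMean]
    congr 1
    ext k
    simp only [tilt, hw, Pi.add_apply, Pi.smul_apply, smul_eq_mul, add_mul, sum_add_distrib,
      exp_add, u, mul_sum, mul_assoc]
    ring
  have hgrad₀ : fderiv ℝ g θstar θ = tiltedMean w u 0 := by simpa using hgrad 0
  have hlhs := sum_mul_apply_single (fderiv ℝ g (θstar + t • θ) - fderiv ℝ g θstar) θ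
  simp only [sub_apply] at hlhs
  rw [ge_iff_le, hlhs, hgrad, hgrad₀]
  exact mul_exp_neg_two_mul_weightedVar_le_tiltedMean_sub (fun k => (hw_pos k).le) hW hbdd ht

/-- Exponential Hessian comparison for log-sum-exp: for
`g(θ) = log((1/m) Σ_k exp(θ'v_k)/c_k)` and any unit-ℓ₁ direction `θ` with
`max_k |θ'v_k| ≤ 1`, for all `t ≥ 0`,
`θ'(∇g(θ*+tθ) − ∇g(θ*)) ≥ t e^{−2t} θ'∇²g(θ*)θ`, where `∇²g(θ*)` is the weighted
covariance matrix with weights `w_k(θ*) = exp(θ*'v_k)/c_k`. -/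
theorem stmt17 (p m : ℕ) [NeZero m] (v : Fin m → Fin p → ℝ) (c : Fin m → ℝ)
    (hc : ∀ k, 0 < c k) (θstar θ : Fin p → ℝ)
    (hunit : (∑ j, |θ j|) = 1) (hbdd : ∀ k, |∑ j, θ j * v k j| ≤ 1)
    (g : (Fin p → ℝ) → ℝ)
    (hg : g = fun x => Real.log ((1 / m : ℝ) * ∑ k, Real.exp (∑ j, x j * v k j) / c k))
    (w : Fin m → ℝ) (hw : ∀ k, w k = Real.exp (∑ j, θstar j * v k j) / c k)
    (t : ℝ) (ht : 0 ≤ t) :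
    ∑ j, θ j * (fderiv ℝ g (θstar + t • θ) (Pi.single j 1 : Fin p → ℝ)
        - fderiv ℝ g θstar (Pi.single j 1 : Fin p → ℝ))
      ≥ t * Real.exp (-2 * t) *
        ((∑ k, w k * (∑ j, θ j * v k j) ^ 2) / (∑ k, w k)
          - ((∑ k, w k * (∑ j, θ j * v k j)) / (∑ k, w k)) ^ 2) :=
  stmt17_general p m v c hc θstar θ hbdd g hg w hw t ht
end
end
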